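/- In the case β = 0, the mADBCD iteration satisfies ‖x⁽ᵏ⁺¹⁾ − x⋆‖²_{AᵀA} ≤ (1 − |τₖ|σ_min(A)²/(n σ_max(A_{τₖ})²)) ‖x⁽ᵏ⁾ − x⋆‖²_{AᵀA}, and the contraction factor lies in [0, 1). -/

import Mathlib

open Matrix BigOperators

noncomputable def sqnorm {k : Type*} [Fintype k] (v : k → ℝ) : ℝ := ∑ i, v i ^ 2

noncomputable def enorm' {k : Type*} [Fintype k] (v : k → ℝ) : ℝ := Real.sqrt (sqnorm v)

noncomputable def sigmaMin {m n : Type*} [Fintype m] [Fintype n] (G : Matrix m n ℝ) : ℝ :=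
  sInf {r | ∃ x : n → ℝ, enorm' x = 1 ∧ r = enorm' (G.mulVec x)}

noncomputable def sigmaMax {m n : Type*} [Fintype m] [Fintype n] (G : Matrix m n ℝ) : ℝ :=
  sSup {r | ∃ x : n → ℝ, enorm' x = 1 ∧ r = enorm' (G.mulVec x)}


noncomputable def toE {k : Type*} [Fintype k] (v : k → ℝ) : EuclideanSpace ℝ k :=
  (WithLp.equiv 2 _).symm v

lemma sqnorm_eq {k : Type*} [Fintype k] (v : k → ℝ) : sqnorm v = ‖toE v‖ ^ 2 := by
  rw [EuclideanSpace.norm_eq]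
  rw [Real.sq_sqrt (by positivity)]
  simp [sqnorm, toE, sq_abs]

lemma sqnorm_nonneg {k : Type*} [Fintype k] (v : k → ℝ) : 0 ≤ sqnorm v := by
  unfold sqnorm; positivity

lemma enorm'_eq {k : Type*} [Fintype k] (v : k → ℝ) : enorm' v = ‖toE v‖ := by
  rw [enorm', sqnorm_eq, Real.sqrt_sq (norm_nonneg _)]

lemma dot_eq_inner {k : Type*} [Fintype k] (u v : k → ℝ) :
    u ⬝ᵥ v = inner ℝ (toE u) (toE v) := by
  simp [dotProduct, toE, PiLp.inner_apply, RCLike.inner_apply, mul_comm]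

noncomputable def gmap {m n : Type*} [Fintype m] [Fintype n] (G : Matrix m n ℝ) : EuclideanSpace ℝ n →ₗ[ℝ] EuclideanSpace ℝ m :=
  (WithLp.linearEquiv 2 ℝ (m → ℝ)).symm.toLinearMap ∘ₗ G.mulVecLin ∘ₗ
    (WithLp.linearEquiv 2 ℝ (n → ℝ)).toLinearMap

lemma gmap_apply {m n : Type*} [Fintype m] [Fintype n] (G : Matrix m n ℝ) (v : n → ℝ) : gmap G (toE v) = toE (G.mulVec v) := rfl

lemma sset_eq {m n : Type*} [Fintype m] [Fintype n] (G : Matrix m n ℝ) :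
    {r | ∃ x : n → ℝ, enorm' x = 1 ∧ r = enorm' (G.mulVec x)} =
      (fun u : EuclideanSpace ℝ n => ‖gmap G u‖) '' Metric.sphere 0 1 := by
  ext r
  constructor
  · rintro ⟨x, hx, rfl⟩
    exact ⟨toE x, by simpa [enorm'_eq] using hx, by simp only [gmap_apply, enorm'_eq]⟩
  · rintro ⟨u, hu, rfl⟩
    refine ⟨WithLp.equiv 2 _ u, ?_, ?_⟩
    · rw [enorm'_eq]
      simpa [toE] using hu
    · rw [enorm'_eq, ← gmap_apply]
      rfl

lemma sset_compact {m n : Type*} [Fintype m] [Fintype n] (G : Matrix m n ℝ) :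
    IsCompact {r | ∃ x : n → ℝ, enorm' x = 1 ∧ r = enorm' (G.mulVec x)} := by
  rw [sset_eq]
  exact (isCompact_sphere 0 1).image
    (continuous_norm.comp (gmap G).continuous_of_finiteDimensional)

lemma sset_bddBelow {m n : Type*} [Fintype m] [Fintype n] (G : Matrix m n ℝ) :
    BddBelow {r | ∃ x : n → ℝ, enorm' x = 1 ∧ r = enorm' (G.mulVec x)} :=
  ⟨0, by rintro r ⟨x, _, rfl⟩; rw [enorm'_eq]; exact norm_nonneg _⟩

lemma sigmaMin_le {m n : Type*} [Fintype m] [Fintype n] (G : Matrix m n ℝ) (x : n → ℝ) (hx : enorm' x = 1) :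
    sigmaMin G ≤ enorm' (G.mulVec x) :=
  csInf_le (sset_bddBelow G) ⟨x, hx, rfl⟩

lemma le_sigmaMax {m n : Type*} [Fintype m] [Fintype n] (G : Matrix m n ℝ) (x : n → ℝ) (hx : enorm' x = 1) :
    enorm' (G.mulVec x) ≤ sigmaMax G :=
  le_csSup (sset_compact G).bddAbove ⟨x, hx, rfl⟩

lemma sigmaMin_mem {m n : Type*} [Fintype m] [Fintype n] [Nonempty n] (G : Matrix m n ℝ) :
    ∃ x : n → ℝ, enorm' x = 1 ∧ sigmaMin G = enorm' (G.mulVec x) := by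
  have hne : {r | ∃ x : n → ℝ, enorm' x = 1 ∧ r = enorm' (G.mulVec x)}.Nonempty := by
    obtain ⟨u, hu⟩ := NormedSpace.sphere_nonempty (E := EuclideanSpace ℝ n) (x := 0)
      (r := 1) |>.2 zero_le_one
    exact ⟨_, WithLp.equiv 2 _ u, by rw [enorm'_eq]; simpa [toE] using hu, rfl⟩
  exact (sset_compact G).sInf_mem hne


lemma sqnorm_eq_sq_enorm' {k : Type*} [Fintype k] (v : k → ℝ) : sqnorm v = enorm' v ^ 2 := by
  rw [enorm'_eq, sqnorm_eq]

lemma toE_smul {k : Type*} [Fintype k] (a : ℝ) (v : k → ℝ) : toE (a • v) = a • toE v := rfl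

lemma enorm'_smul {k : Type*} [Fintype k] (a : ℝ) (v : k → ℝ) :
    enorm' (a • v) = |a| * enorm' v := by
  rw [enorm'_eq, enorm'_eq, toE_smul, norm_smul, Real.norm_eq_abs]

lemma enorm'_pos {k : Type*} [Fintype k] {v : k → ℝ} (hv : v ≠ 0) : 0 < enorm' v := by
  rw [enorm'_eq]
  rw [norm_pos_iff]
  exact fun h => hv (by simpa [toE] using congrArg (WithLp.equiv 2 _) h)

lemma enorm'_nonneg {k : Type*} [Fintype k] (v : k → ℝ) : 0 ≤ enorm' v :=
  Real.sqrt_nonneg _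

lemma sigmaMax_nonneg {m n : Type*} [Fintype m] [Fintype n] [Nonempty n]
    (G : Matrix m n ℝ) : 0 ≤ sigmaMax G := by
  obtain ⟨x, hx, _⟩ := sigmaMin_mem G
  exact (enorm'_nonneg _).trans (le_sigmaMax G x hx)

lemma sigmaMin_nonneg {m n : Type*} [Fintype m] [Fintype n] [Nonempty n]
    (G : Matrix m n ℝ) : 0 ≤ sigmaMin G := by
  obtain ⟨x, hx, h⟩ := sigmaMin_mem G
  rw [h]; exact enorm'_nonneg _

lemma enorm'_mulVec_le {m n : Type*} [Fintype m] [Fintype n]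
    (G : Matrix m n ℝ) (y : n → ℝ) :
    enorm' (G.mulVec y) ≤ sigmaMax G * enorm' y := by
  by_cases hy : y = 0
  · have h0 : enorm' (0 : n → ℝ) = 0 := by
      simp [enorm', sqnorm]
    have h0' : enorm' (0 : m → ℝ) = 0 := by
      simp [enorm', sqnorm]
    simp [hy, Matrix.mulVec_zero, h0, h0']
  · have hc : 0 < enorm' y := enorm'_pos hy
    have hu : enorm' ((enorm' y)⁻¹ • y) = 1 := by
      rw [enorm'_smul, abs_of_pos (by positivity), inv_mul_cancel₀ hc.ne']
    have := le_sigmaMax G _ hu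
    rw [Matrix.mulVec_smul, enorm'_smul, abs_of_pos (by positivity)] at this
    calc enorm' (G.mulVec y) = enorm' y * ((enorm' y)⁻¹ * enorm' (G.mulVec y)) := by
          field_simp
      _ ≤ enorm' y * sigmaMax G := by
          exact mul_le_mul_of_nonneg_left this hc.le
      _ = sigmaMax G * enorm' y := mul_comm _ _

lemma le_enorm'_mulVec {m n : Type*} [Fintype m] [Fintype n] (G : Matrix m n ℝ) (y : n → ℝ)
    (hy : y ≠ 0) :
    sigmaMin G * enorm' y ≤ enorm' (G.mulVec y) := by
  have hc : 0 < enorm' y := enorm'_pos hy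
  have hu : enorm' ((enorm' y)⁻¹ • y) = 1 := by
    rw [enorm'_smul, abs_of_pos (by positivity), inv_mul_cancel₀ hc.ne']
  have := sigmaMin_le G _ hu
  rw [Matrix.mulVec_smul, enorm'_smul, abs_of_pos (by positivity)] at this
  calc sigmaMin G * enorm' y ≤ ((enorm' y)⁻¹ * enorm' (G.mulVec y)) * enorm' y := by
        exact mul_le_mul_of_nonneg_right this hc.le
    _ = enorm' (G.mulVec y) := by field_simp

lemma sq_mulVec_le {m n : Type*} [Fintype m] [Fintype n] (G : Matrix m n ℝ) (y : n → ℝ)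
    [Nonempty n] :
    sqnorm (G.mulVec y) ≤ sigmaMax G ^ 2 * sqnorm y := by
  rw [sqnorm_eq_sq_enorm', sqnorm_eq_sq_enorm']
  calc enorm' (G.mulVec y) ^ 2 ≤ (sigmaMax G * enorm' y) ^ 2 :=
        pow_le_pow_left₀ (enorm'_nonneg _) (enorm'_mulVec_le G y) 2
    _ = sigmaMax G ^ 2 * enorm' y ^ 2 := by ring

lemma sqnorm_eq_zero_iff {k : Type*} [Fintype k] {v : k → ℝ} : sqnorm v = 0 ↔ v = 0 := by
  constructor
  · intro h
    funext i
    have h2 : ∀ j ∈ Finset.univ, (0:ℝ) ≤ v j ^ 2 := fun j _ => sq_nonneg _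
    have := (Finset.sum_eq_zero_iff_of_nonneg h2).1 h i (Finset.mem_univ i)
    exact pow_eq_zero_iff (by norm_num) |>.1 this
  · intro h; simp [h, sqnorm]

/-- extension by zero -/
noncomputable def extz {n : Type*} [Fintype n] [DecidableEq n] (τ : Finset n) (u : ↥τ → ℝ) :
    n → ℝ := fun i => if h : i ∈ τ then u ⟨i, h⟩ else 0

lemma mulVec_extz {m n : Type*} [Fintype m] [Fintype n] [DecidableEq n]
    (A : Matrix m n ℝ) (τ : Finset n) (u : ↥τ → ℝ) :
    A.mulVec (extz τ u) = (A.submatrix id (fun j : ↥τ => (j : n))).mulVec u := by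
  funext i
  show ∑ j, A i j * extz τ u j = ∑ j : ↥τ, A i (j : n) * u j
  rw [← Finset.sum_subset (Finset.subset_univ τ) (by
    intro j _ hj
    simp [extz, hj])]
  rw [← Finset.sum_attach τ (fun j => A i j * extz τ u j)]
  rw [← Finset.univ_eq_attach]
  refine Finset.sum_congr rfl fun x _ => ?_
  simp [extz, x.2]

lemma sqnorm_extz {n : Type*} [Fintype n] [DecidableEq n] (τ : Finset n) (u : ↥τ → ℝ) :
    sqnorm (extz τ u) = sqnorm u := by
  show ∑ j, extz τ u j ^ 2 = ∑ j : ↥τ, u j ^ 2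
  rw [← Finset.sum_subset (Finset.subset_univ τ) (by
    intro j _ hj
    simp [extz, hj])]
  rw [← Finset.sum_attach τ (fun j => extz τ u j ^ 2), ← Finset.univ_eq_attach]
  refine Finset.sum_congr rfl fun x _ => ?_
  simp [extz, x.2]

lemma enorm'_extz {n : Type*} [Fintype n] [DecidableEq n] (τ : Finset n) (u : ↥τ → ℝ) :
    enorm' (extz τ u) = enorm' u := by
  rw [enorm', enorm', sqnorm_extz]

lemma mulVec_inj_of_rank {m n : ℕ} {A : Matrix (Fin m) (Fin n) ℝ} (hrank : A.rank = n) :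
    Function.Injective A.mulVec := by
  have h1 : Module.finrank ℝ (LinearMap.range A.mulVecLin) +
      Module.finrank ℝ (LinearMap.ker A.mulVecLin) =
      Module.finrank ℝ (Fin n → ℝ) := LinearMap.finrank_range_add_finrank_ker _
  rw [show Module.finrank ℝ (LinearMap.range A.mulVecLin) = A.rank from rfl,
    hrank] at h1
  rw [show Module.finrank ℝ (Fin n → ℝ) = n from by
    exact Module.finrank_fin_fun ℝ] at h1
  have hker : LinearMap.ker A.mulVecLin = ⊥ :=
    Submodule.finrank_eq_zero.1 (by omega)
  have := LinearMap.ker_eq_bot.1 hker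
  exact this

theorem stmt_16 {m n : ℕ} (A : Matrix (Fin m) (Fin n) ℝ) (hrank : A.rank = n)
    (b : Fin m → ℝ) (xstar : Fin n → ℝ)
    (hstar : (Aᵀ * A).mulVec xstar = Aᵀ.mulVec b) (xk : Fin n → ℝ) :
    let sk : Fin n → ℝ := Aᵀ.mulVec (b - A.mulVec xk)
    let τk : Finset (Fin n) := Finset.univ.filter fun j => (sk j) ^ 2 ≥ sqnorm sk / n
    let ηk : Fin n → ℝ := ∑ j ∈ τk, sk j • (Pi.single j 1 : Fin n → ℝ)
    let xkp : Fin n → ℝ := xk + (ηk ⬝ᵥ sk / sqnorm (A.mulVec ηk)) • ηk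
    let Aτ : Matrix (Fin m) ↥τk ℝ := A.submatrix id (fun j : ↥τk => (j : Fin n))
    sk ≠ 0 →
      sqnorm (A.mulVec (xkp - xstar)) ≤
        (1 - (τk.card : ℝ) * sigmaMin A ^ 2 / (n * sigmaMax Aτ ^ 2)) *
          sqnorm (A.mulVec (xk - xstar)) ∧
      0 ≤ 1 - (τk.card : ℝ) * sigmaMin A ^ 2 / (n * sigmaMax Aτ ^ 2) ∧
      1 - (τk.card : ℝ) * sigmaMin A ^ 2 / (n * sigmaMax Aτ ^ 2) < 1 := by
  intro sk τk ηk xkp Aτ hs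
  classical
  have hskdef : sk = Aᵀ.mulVec (b - A.mulVec xk) := rfl
  have hτdef : τk = Finset.univ.filter fun j => (sk j) ^ 2 ≥ sqnorm sk / n := rfl
  have hηdef : ηk = ∑ j ∈ τk, sk j • (Pi.single j 1 : Fin n → ℝ) := rfl
  have hxkpdef : xkp = xk + (ηk ⬝ᵥ sk / sqnorm (A.mulVec ηk)) • ηk := rfl
  have hAτdef : Aτ = A.submatrix id (fun j : ↥τk => (j : Fin n)) := rfl
  have hn0 : n ≠ 0 := by
    rintro rfl
    exact hs (funext fun i => i.elim0)
  have hn : (0:ℝ) < n := by exact_mod_cast Nat.pos_of_ne_zero hn0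
  haveI hne : Nonempty (Fin n) := ⟨⟨0, Nat.pos_of_ne_zero hn0⟩⟩
  set e : Fin n → ℝ := xk - xstar with he
  -- s_k = -(AᵀA)e
  have hx : Aᵀ.mulVec (A.mulVec xstar) = Aᵀ.mulVec b := by
    rw [Matrix.mulVec_mulVec]; exact hstar
  have hsk : Aᵀ.mulVec (A.mulVec e) = -sk := by
    rw [hskdef, he]
    simp only [Matrix.mulVec_sub]
    rw [hx, neg_sub]
  have hη : ∀ i, ηk i = if i ∈ τk then sk i else 0 := by
    intro i
    rw [hηdef]
    simp only [Finset.sum_apply, Pi.smul_apply, Pi.single_apply, smul_eq_mul, mul_ite,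
      mul_one, mul_zero]
    rw [Finset.sum_ite_eq τk i sk]
  have hηextz : ηk = extz τk (fun j : ↥τk => sk (j : Fin n)) := by
    funext i
    rw [hη i, extz]
    split_ifs <;> rfl
  set T : ℝ := ηk ⬝ᵥ sk with hT
  have hTsum : T = ∑ j ∈ τk, sk j ^ 2 := by
    rw [hT, dotProduct]
    rw [Finset.sum_congr rfl (fun i _ => by rw [hη i, ite_mul, zero_mul])]
    rw [Finset.sum_ite_mem, Finset.univ_inter]
    exact Finset.sum_congr rfl fun i _ => (pow_two (sk i)).symm
  have hsqη : sqnorm ηk = T := by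
    rw [hTsum, sqnorm]
    rw [Finset.sum_congr rfl (fun i _ => by rw [hη i, ite_pow, zero_pow two_ne_zero])]
    rw [Finset.sum_ite_mem, Finset.univ_inter]
  have hskpos : 0 < sqnorm sk :=
    (sqnorm_nonneg sk).lt_of_ne fun h => hs (sqnorm_eq_zero_iff.1 h.symm)
  have hτmem : ∀ j, j ∈ τk ↔ sk j ^ 2 ≥ sqnorm sk / n := by
    intro j; rw [hτdef]; simp
  have hτne : τk.Nonempty := by
    obtain ⟨j, -, hj⟩ := Finset.exists_max_image Finset.univ (fun j => sk j ^ 2)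
      ⟨Classical.arbitrary _, Finset.mem_univ _⟩
    refine ⟨j, (hτmem j).2 ?_⟩
    rw [ge_iff_le, div_le_iff₀ hn]
    calc sqnorm sk = ∑ i, sk i ^ 2 := rfl
      _ ≤ ∑ _i : Fin n, sk j ^ 2 := Finset.sum_le_sum fun i _ => hj i (Finset.mem_univ i)
      _ = sk j ^ 2 * n := by
          rw [Finset.sum_const, Finset.card_univ, Fintype.card_fin, nsmul_eq_mul, mul_comm]
  have hcardR : (0:ℝ) < τk.card := by exact_mod_cast Finset.card_pos.2 hτne
  have hTge : (τk.card : ℝ) * (sqnorm sk / n) ≤ T := by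
    rw [hTsum]
    calc (τk.card : ℝ) * (sqnorm sk / n) = ∑ _j ∈ τk, sqnorm sk / n := by
          rw [Finset.sum_const, nsmul_eq_mul]
      _ ≤ ∑ j ∈ τk, sk j ^ 2 := Finset.sum_le_sum fun j hj => (hτmem j).1 hj
  have hTpos : 0 < T := lt_of_lt_of_le (by positivity) hTge
  have hηne : ηk ≠ 0 := fun h => hTpos.ne' (hsqη ▸ (by simp [h, sqnorm] : sqnorm ηk = 0) ▸ rfl)
  have hinj := mulVec_inj_of_rank hrank
  have hA0 : A.mulVec (0 : Fin n → ℝ) = 0 := Matrix.mulVec_zero A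
  have hAηne : A.mulVec ηk ≠ 0 := fun h => hηne (hinj (h.trans hA0.symm))
  set P : ℝ := sqnorm (A.mulVec ηk) with hP
  have hPpos : 0 < P :=
    (sqnorm_nonneg _).lt_of_ne fun h => hAηne (sqnorm_eq_zero_iff.1 h.symm)
  have hene : e ≠ 0 := by
    intro h
    have h2 := hsk
    rw [h, Matrix.mulVec_zero, Matrix.mulVec_zero] at h2
    exact hs (neg_eq_zero.1 h2.symm)
  have hAene : A.mulVec e ≠ 0 := fun h => hene (hinj (h.trans hA0.symm))
  set Q : ℝ := sqnorm (A.mulVec e) with hQ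
  have hQpos : 0 < Q :=
    (sqnorm_nonneg _).lt_of_ne fun h => hAene (sqnorm_eq_zero_iff.1 h.symm)
  -- singular values
  obtain ⟨x0, hx0, hmineq⟩ := sigmaMin_mem A
  have hx0ne : x0 ≠ 0 := by
    intro h
    rw [h] at hx0
    simp [enorm', sqnorm] at hx0
  have hσminpos : 0 < sigmaMin A := by
    rw [hmineq]
    exact enorm'_pos fun h => hx0ne (hinj (h.trans hA0.symm))
  haveI : Nonempty ↥τk := ⟨⟨hτne.choose, hτne.choose_spec⟩⟩
  set u0 : ↥τk → ℝ := Pi.single (Classical.arbitrary ↥τk) 1 with hu0def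
  have hu0 : enorm' u0 = 1 := by
    have h1 : sqnorm u0 = 1 := by
      rw [sqnorm, hu0def]
      rw [Finset.sum_congr rfl (fun i _ => by
        rw [Pi.single_apply, ite_pow, one_pow, zero_pow two_ne_zero])]
      simp
    rw [enorm', h1, Real.sqrt_one]
  have hminmax : sigmaMin A ≤ sigmaMax Aτ := by
    have h1 : sigmaMin A ≤ enorm' (A.mulVec (extz τk u0)) :=
      sigmaMin_le A _ (by rw [enorm'_extz]; exact hu0)
    rw [mulVec_extz] at h1
    exact h1.trans (le_sigmaMax Aτ u0 hu0)
  have hσmaxpos : 0 < sigmaMax Aτ := hσminpos.trans_le hminmax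
  -- P ≤ σmax² T
  have hPle : P ≤ sigmaMax Aτ ^ 2 * T := by
    have h1 : A.mulVec ηk = Aτ.mulVec (fun j : ↥τk => sk (j : Fin n)) := by
      rw [hηextz, mulVec_extz, hAτdef]
    have h2 : sqnorm (fun j : ↥τk => sk (j : Fin n)) = T := by
      rw [hTsum, sqnorm, ← Finset.sum_coe_sort τk (fun j => sk j ^ 2)]
    rw [hP, h1]
    calc sqnorm (Aτ.mulVec fun j : ↥τk => sk (j : Fin n))
        ≤ sigmaMax Aτ ^ 2 * sqnorm (fun j : ↥τk => sk (j : Fin n)) := sq_mulVec_le Aτ _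
      _ = sigmaMax Aτ ^ 2 * T := by rw [h2]
  -- σmin² Q ≤ ‖sk‖²
  have hcs : Q ≤ enorm' e * enorm' sk := by
    have h1 : Q = -(sk ⬝ᵥ e) := by
      rw [hQ]
      have : sqnorm (A.mulVec e) = (A.mulVec e) ⬝ᵥ (A.mulVec e) := by
        simp [sqnorm, dotProduct, pow_two]
      rw [this, Matrix.dotProduct_mulVec, ← Matrix.mulVec_transpose, hsk]
      simp
    have h2 : |sk ⬝ᵥ e| ≤ enorm' sk * enorm' e := by
      rw [dot_eq_inner, enorm'_eq, enorm'_eq]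
      exact abs_real_inner_le_norm _ _
    calc Q = -(sk ⬝ᵥ e) := h1
      _ ≤ |sk ⬝ᵥ e| := neg_le_abs _
      _ ≤ enorm' sk * enorm' e := h2
      _ = enorm' e * enorm' sk := mul_comm _ _
  have hQe : sigmaMin A * enorm' e ≤ enorm' (A.mulVec e) := le_enorm'_mulVec A e hene
  have hs2 : sigmaMin A ^ 2 * Q ≤ sqnorm sk := by
    have hQ2 : Q = enorm' (A.mulVec e) ^ 2 := by rw [hQ, sqnorm_eq_sq_enorm']
    have hsk2 : sqnorm sk = enorm' sk ^ 2 := sqnorm_eq_sq_enorm' sk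
    have ha : 0 < enorm' (A.mulVec e) := enorm'_pos hAene
    have hb : 0 ≤ enorm' e := enorm'_nonneg e
    have hc : 0 ≤ enorm' sk := enorm'_nonneg sk
    have hσ : 0 ≤ sigmaMin A := hσminpos.le
    rw [hQ2] at hcs ⊢
    rw [hsk2]
    nlinarith [mul_le_mul_of_nonneg_right hQe hc, mul_le_mul_of_nonneg_left hcs hσ,
      sq_nonneg (sigmaMin A * enorm' (A.mulVec e) - enorm' sk), ha.le]
  -- main identity
  have hdiff : xkp - xstar = e + (T / P) • ηk := by
    rw [hxkpdef, he]
    funext i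
    simp only [Pi.add_apply, Pi.sub_apply, Pi.smul_apply, smul_eq_mul, hT, hP]
    ring
  have hAd : toE (A.mulVec (xkp - xstar)) = toE (A.mulVec e) + (T / P) • toE (A.mulVec ηk) := by
    rw [hdiff, Matrix.mulVec_add, Matrix.mulVec_smul]
    rfl
  have hinner : (inner ℝ (toE (A.mulVec e)) (toE (A.mulVec ηk)) : ℝ) = -T := by
    rw [← dot_eq_inner, Matrix.dotProduct_mulVec, ← Matrix.mulVec_transpose, hsk, hT]
    rw [neg_dotProduct, dotProduct_comm]
  have hmain : sqnorm (A.mulVec (xkp - xstar)) = Q - T ^ 2 / P := by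
    have e1 : ‖toE (A.mulVec e)‖ ^ 2 = Q := (sqnorm_eq _).symm
    have e2 : ‖toE (A.mulVec ηk)‖ ^ 2 = P := (sqnorm_eq _).symm
    rw [sqnorm_eq, hAd, norm_add_sq_real, real_inner_smul_right, hinner, norm_smul, mul_pow,
      e1, e2]
    rw [Real.norm_eq_abs, sq_abs]
    field_simp
    ring
  -- key inequality
  have hkey : (τk.card : ℝ) * sigmaMin A ^ 2 / (↑n * sigmaMax Aτ ^ 2) * Q ≤ T ^ 2 / P := by
    rw [div_mul_eq_mul_div, div_le_div_iff₀ (mul_pos hn (pow_pos hσmaxpos 2)) hPpos]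
    have hA1 : (τk.card : ℝ) * sigmaMin A ^ 2 * Q ≤ ↑n * T := by
      have h2 : (τk.card : ℝ) * (sigmaMin A ^ 2 * Q) ≤ ↑(τk.card) * sqnorm sk :=
        mul_le_mul_of_nonneg_left hs2 hcardR.le
      have h3 : (τk.card : ℝ) * sqnorm sk ≤ ↑n * T := by
        have h5 := mul_le_mul_of_nonneg_left hTge hn.le
        calc (τk.card : ℝ) * sqnorm sk = ↑n * (↑τk.card * (sqnorm sk / ↑n)) := by
              field_simp
          _ ≤ ↑n * T := h5
      linarith
    have h4 : ((τk.card : ℝ) * sigmaMin A ^ 2 * Q) * P ≤ (↑n * T) * (sigmaMax Aτ ^ 2 * T) :=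
      mul_le_mul hA1 hPle (sqnorm_nonneg _) (by positivity)
    exact le_trans h4 (le_of_eq (by ring))
  have hcle1 : (τk.card : ℝ) * sigmaMin A ^ 2 / (↑n * sigmaMax Aτ ^ 2) ≤ 1 := by
    rw [div_le_one (mul_pos hn (pow_pos hσmaxpos 2))]
    have h1 : (τk.card : ℝ) ≤ n := by
      have := Finset.card_le_card (Finset.subset_univ τk)
      rw [Finset.card_univ, Fintype.card_fin] at this
      exact_mod_cast this
    have h2 : sigmaMin A ^ 2 ≤ sigmaMax Aτ ^ 2 := pow_le_pow_left₀ hσminpos.le hminmax 2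
    exact mul_le_mul h1 h2 (sq_nonneg _) hn.le
  have hcpos : 0 < (τk.card : ℝ) * sigmaMin A ^ 2 / (↑n * sigmaMax Aτ ^ 2) :=
    div_pos (mul_pos hcardR (pow_pos hσminpos 2)) (mul_pos hn (pow_pos hσmaxpos 2))
  refine ⟨?_, by linarith, by linarith⟩
  rw [hmain]
  have hexp : (1 - (τk.card : ℝ) * sigmaMin A ^ 2 / (↑n * sigmaMax Aτ ^ 2)) * Q =
      Q - (τk.card : ℝ) * sigmaMin A ^ 2 / (↑n * sigmaMax Aτ ^ 2) * Q := by ring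
  rw [hexp]
  linarith [hkey]
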